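/- arXiv:math/0106023 — 2 statements merged into one kernel-verified Lean document; each statement's English description precedes it below -/
import Mathlib

section
/- Let E be a Banach space with a Schauder basis {e_n} and let Σ be a countable set. Let τ be a mapping defined on the family of all block subspaces of E (with respect to {e_n}) with values in the powerset of Σ, which is increasing with respect to the quasi-order ≤ and inclusion, i.e. for all block subspaces N, M, if N ≤ M then τ(N) ⊆ τ(M). Then there exists a block subspace M which is stabilizing for τ, i.e. τ(L) = τ(M) for every block subspace L with L ⊆ M. -/
open Filter Topology

/-- Two sequences of vectors are `c`-equivalent: the natural map between their spans
distorts norms of finite linear combinations by at most a factor `c`. -/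
def SeqEquiv {E F : Type*} [NormedAddCommGroup E] [NormedSpace ℝ E]
    [NormedAddCommGroup F] [NormedSpace ℝ F]
    (c : ℝ) (x : ℕ → E) (y : ℕ → F) : Prop :=
  ∀ (s : Finset ℕ) (a : ℕ → ℝ),
    (1 / c) * ‖∑ i ∈ s, a i • x i‖ ≤ ‖∑ i ∈ s, a i • y i‖ ∧
    ‖∑ i ∈ s, a i • y i‖ ≤ c * ‖∑ i ∈ s, a i • x i‖

/-- A basic sequence: nonzero vectors whose partial-sum projections are uniformly bounded,
i.e. a Schauder basis of its closed linear span. -/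
def IsBasicSeq {E : Type*} [NormedAddCommGroup E] [NormedSpace ℝ E] (x : ℕ → E) : Prop :=
  (∀ n, x n ≠ 0) ∧
  ∃ K : ℝ, 1 ≤ K ∧ ∀ (a : ℕ → ℝ) (m n : ℕ), m ≤ n →
    ‖∑ i ∈ Finset.range m, a i • x i‖ ≤ K * ‖∑ i ∈ Finset.range n, a i • x i‖

/-- An unconditional basic sequence. -/
def IsUnconditionalSeq {E : Type*} [NormedAddCommGroup E] [NormedSpace ℝ E]
    (x : ℕ → E) : Prop :=
  IsBasicSeq x ∧
  ∃ K : ℝ, 0 < K ∧ ∀ (s : Finset ℕ) (a ε : ℕ → ℝ), (∀ i, ε i = 1 ∨ ε i = -1) →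
    ‖∑ i ∈ s, (ε i * a i) • x i‖ ≤ K * ‖∑ i ∈ s, a i • x i‖

/-- A `C`-subsymmetric sequence: an unconditional basic sequence that is `C`-equivalent
to each of its subsequences. -/
def IsSubsymmetric {E : Type*} [NormedAddCommGroup E] [NormedSpace ℝ E]
    (C : ℝ) (x : ℕ → E) : Prop :=
  IsUnconditionalSeq x ∧ ∀ φ : ℕ → ℕ, StrictMono φ → SeqEquiv C x (x ∘ φ)

/-- A Schauder basis of `E`: biorthogonal system whose partial sums of the expansion of
every vector converge to that vector. -/
structure SchauderBasisSeq (E : Type*) [NormedAddCommGroup E] [NormedSpace ℝ E] where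
  e : ℕ → E
  coord : ℕ → E →L[ℝ] ℝ
  biorth : ∀ i j, coord i (e j) = if i = j then (1 : ℝ) else 0
  expand : ∀ x : E,
    Filter.Tendsto (fun n => ∑ i ∈ Finset.range n, coord i x • e i) atTop (𝓝 x)

/-- A block sequence with respect to a Schauder basis: nonzero, finitely supported
vectors with successive supports. -/
def IsBlockSeq {E : Type*} [NormedAddCommGroup E] [NormedSpace ℝ E]
    (b : SchauderBasisSeq E) (x : ℕ → E) : Prop :=
  (∀ n, x n ≠ 0) ∧
  (∀ n, (Function.support fun i => b.coord i (x n)).Finite) ∧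
  ∀ m n, m < n → ∀ i ∈ Function.support (fun i => b.coord i (x m)),
    ∀ j ∈ Function.support (fun j => b.coord j (x n)), i < j

/-- A block subspace: the closed linear span of a block sequence. -/
def IsBlockSubspace {E : Type*} [NormedAddCommGroup E] [NormedSpace ℝ E]
    (b : SchauderBasisSeq E) (M : Submodule ℝ E) : Prop :=
  ∃ x : ℕ → E, IsBlockSeq b x ∧ M = (Submodule.span ℝ (Set.range x)).topologicalClosure

/-- An infinite-dimensional closed subspace. -/
def InfDimClosed {E : Type*} [NormedAddCommGroup E] [NormedSpace ℝ E]
    (M : Submodule ℝ E) : Prop :=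
  IsClosed (M : Set E) ∧ ¬ FiniteDimensional ℝ M

/-- The quasi-order on subspaces: `L ≤ M` iff `L ⊆ M + F` for some finite-dimensional `F`. -/
def SubspaceLE {E : Type*} [NormedAddCommGroup E] [NormedSpace ℝ E]
    (L M : Submodule ℝ E) : Prop :=
  ∃ F : Submodule ℝ E, FiniteDimensional ℝ F ∧ L ≤ M ⊔ F

/-- The equivalence relation `≐` induced by the quasi-order `SubspaceLE`. -/
def SubspaceEquiv {E : Type*} [NormedAddCommGroup E] [NormedSpace ℝ E]
    (L M : Submodule ℝ E) : Prop :=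
  SubspaceLE L M ∧ SubspaceLE M L

/-- Two normed spaces are `c`-isomorphic: a linear isomorphism with
`(1/c)‖v‖ ≤ ‖Tv‖ ≤ c‖v‖`. -/
def IsoWithConst (c : ℝ) (X Y : Type*) [NormedAddCommGroup X] [NormedSpace ℝ X]
    [NormedAddCommGroup Y] [NormedSpace ℝ Y] : Prop :=
  ∃ T : X ≃ₗ[ℝ] Y, ∀ v : X, (1 / c) * ‖v‖ ≤ ‖T v‖ ∧ ‖T v‖ ≤ c * ‖v‖

/-- A `c`-minimal Banach space: every infinite-dimensional closed subspace contains a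
further infinite-dimensional closed subspace `c`-isomorphic to the whole space. -/
def CMinimalSpace (c : ℝ) (X : Type*) [NormedAddCommGroup X] [NormedSpace ℝ X] : Prop :=
  ∀ L : Submodule ℝ X, InfDimClosed L →
    ∃ N : Submodule ℝ X, N ≤ L ∧ InfDimClosed N ∧ IsoWithConst c ↥N X

/-- A minimal Banach space: every infinite-dimensional closed subspace contains a
further infinite-dimensional closed subspace isomorphic to the whole space. -/
def MinimalSpace (X : Type*) [NormedAddCommGroup X] [NormedSpace ℝ X] : Prop :=
  ∀ L : Submodule ℝ X, InfDimClosed L →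
    ∃ N : Submodule ℝ X, N ≤ L ∧ InfDimClosed N ∧ Nonempty (↥N ≃L[ℝ] X)

/-! Enumerate `σ = {s₀, s₁, …}` and build a decreasing chain of block subspaces `P k` in which
`P (k+1)` decides `s k`: either `s k ∉ τ (P (k+1))`, or `s k ∈ τ N` for every block subspace
`N ⊆ P k`. Picking one vector from each `P k` with successive supports gives a block subspace `M`
that is almost contained in every `P k`, hence `τ M ⊆ τ (P k)` for all `k`. If `L ⊆ M` is a block
subspace and `s k ∈ τ M`, then `s k ∈ τ (P (k+1))`, so the second alternative holds; since
`L` is almost contained in `P k`, the two contain a common block subspace `N`, whence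
`s k ∈ τ N ⊆ τ L`. The common block subspace comes from a dimension count: modulo `P k`, any
`dim F + 1` consecutive vectors of a block basis of `L ⊆ P k + F` are linearly dependent. -/

open Submodule

theorem Submodule.exists_ne_zero_sum_smul_mem_of_forall_mem_sup {K V ι : Type*} [Field K]
    [AddCommGroup V] [Module K V] [Fintype ι] {M F : Submodule K V} [FiniteDimensional K F]
    (hcard : Module.finrank K F < Fintype.card ι) {v : ι → V} (hv : ∀ j, v j ∈ M ⊔ F) :
    ∃ g : ι → K, g ≠ 0 ∧ ∑ j, g j • v j ∈ M := by
  have hdep : ¬ LinearIndependent K (M.mkQ ∘ v) := fun hli => by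
    have hspan : span K (Set.range (M.mkQ ∘ v)) ≤ F.map M.mkQ := by
      rw [span_le, Set.range_subset_iff]
      intro j
      have hj := hv j
      rwa [← comap_map_mkQ] at hj
    have hle := linearIndependent_iff_card_le_finrank_span.1 hli
    have := (finrank_mono hspan).trans (finrank_map_le M.mkQ F)
    rw [Set.finrank] at hle
    omega
  obtain ⟨g, hg, j, hj⟩ := Fintype.not_linearIndependent_iff.1 hdep
  refine ⟨g, Function.ne_iff.2 ⟨j, hj⟩, ?_⟩
  rw [← Quotient.mk_eq_zero, ← mkQ_apply, map_sum]
  simpa using hg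

section

variable {E : Type*} [NormedAddCommGroup E] [NormedSpace ℝ E]

namespace SchauderBasisSeq

variable (b : SchauderBasisSeq E)

theorem eq_zero_of_forall_coord_eq_zero {x : E} (h : ∀ i, b.coord i x = 0) : x = 0 := by
  have hlim := b.expand x
  simp only [h, zero_smul, Finset.sum_const_zero] at hlim
  exact tendsto_nhds_unique hlim tendsto_const_nhds

theorem exists_coord_ne_zero {x : E} (hx : x ≠ 0) : ∃ i, b.coord i x ≠ 0 := by
  by_contra! h
  exact hx (b.eq_zero_of_forall_coord_eq_zero h)

theorem exists_coord_ne_zero_of_coord_sum_ne_zero {ι : Type*} {s : Finset ι} {c : ι → ℝ}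
    {x : ι → E} {i : ℕ} (h : b.coord i (∑ j ∈ s, c j • x j) ≠ 0) :
    ∃ j ∈ s, b.coord i (x j) ≠ 0 := by
  simp only [map_sum, map_smul, smul_eq_mul] at h
  obtain ⟨j, hj, hne⟩ := Finset.exists_ne_zero_of_sum_ne_zero h
  exact ⟨j, hj, right_ne_zero_of_mul hne⟩

theorem isBlockSeq_e : IsBlockSeq b b.e := by
  have hsupp : ∀ n, (Function.support fun i => b.coord i (b.e n)) = {n} := fun n => by
    ext i
    simp [b.biorth]
  refine ⟨fun n hn => ?_, fun n => hsupp n ▸ Set.finite_singleton n, ?_⟩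
  · simpa [hn] using b.biorth n n
  · intro m n hmn i hi j hj
    rw [hsupp, Set.mem_singleton_iff] at hi hj
    rwa [hi, hj]

theorem isBlockSubspace_span_e :
    IsBlockSubspace b (span ℝ (Set.range b.e)).topologicalClosure :=
  ⟨b.e, b.isBlockSeq_e, rfl⟩

end SchauderBasisSeq

namespace IsBlockSeq

variable {b : SchauderBasisSeq E} {x : ℕ → E}

theorem le_of_coord_ne_zero (hx : IsBlockSeq b x) {n i : ℕ} (hi : b.coord i (x n) ≠ 0) :
    n ≤ i := by
  induction n generalizing i with
  | zero => exact Nat.zero_le i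
  | succ n ih =>
    obtain ⟨j, hj⟩ := b.exists_coord_ne_zero (hx.1 n)
    exact (ih hj).trans_lt (hx.2.2 n (n + 1) n.lt_succ_self j hj i hi)

theorem coord_eq_zero_of_ne (hx : IsBlockSeq b x) {m n i : ℕ} (hmn : m ≠ n)
    (hi : b.coord i (x m) ≠ 0) : b.coord i (x n) = 0 := by
  by_contra hn
  rcases hmn.lt_or_gt with h | h
  · exact lt_irrefl i (hx.2.2 m n h i hi i hn)
  · exact lt_irrefl i (hx.2.2 n m h i hn i hi)

theorem sum_smul_ne_zero (hx : IsBlockSeq b x) {ι : Type*} {s : Finset ι} {φ : ι → ℕ}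
    (hφ : Function.Injective φ) {c : ι → ℝ} {j₀ : ι} (hj₀ : j₀ ∈ s) (hc : c j₀ ≠ 0) :
    ∑ j ∈ s, c j • x (φ j) ≠ 0 := by
  obtain ⟨i, hi⟩ := b.exists_coord_ne_zero (hx.1 (φ j₀))
  have hcoord : b.coord i (∑ j ∈ s, c j • x (φ j)) = c j₀ * b.coord i (x (φ j₀)) := by
    simp only [map_sum, map_smul, smul_eq_mul]
    refine Finset.sum_eq_single_of_mem j₀ hj₀ fun j _ hj => ?_
    rw [hx.coord_eq_zero_of_ne (hφ.ne hj).symm hi, mul_zero]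
  intro h0
  rw [h0, map_zero] at hcoord
  exact mul_ne_zero hc hi hcoord.symm

theorem consecutive_sums (hx : IsBlockSeq b x) {m : ℕ} (g : ℕ → Fin m → ℝ)
    (hg : ∀ k, g k ≠ 0) : IsBlockSeq b fun k => ∑ j : Fin m, g k j • x (k * m + j) := by
  refine ⟨fun k => ?_, fun k => ?_, fun k k' hkk' i hi i' hi' => ?_⟩
  · obtain ⟨j₀, hj₀⟩ := Function.ne_iff.1 (hg k)
    exact hx.sum_smul_ne_zero (fun j j' h => Fin.ext (by simpa using h))
      (Finset.mem_univ j₀) hj₀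
  · refine (Set.finite_iUnion fun j : Fin m => hx.2.1 (k * m + j)).subset fun i hi => ?_
    obtain ⟨j, -, hj⟩ := b.exists_coord_ne_zero_of_coord_sum_ne_zero hi
    exact Set.mem_iUnion.2 ⟨j, hj⟩
  · obtain ⟨j, -, hj⟩ := b.exists_coord_ne_zero_of_coord_sum_ne_zero hi
    obtain ⟨j', -, hj'⟩ := b.exists_coord_ne_zero_of_coord_sum_ne_zero hi'
    refine hx.2.2 _ _ ?_ i hj i' hj'
    calc k * m + j < (k + 1) * m := by rw [add_mul, one_mul]; exact Nat.add_lt_add_left j.isLt _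
      _ ≤ k' * m := Nat.mul_le_mul_right _ hkk'
      _ ≤ k' * m + j' := Nat.le_add_right _ _

end IsBlockSeq

theorem exists_isBlockSeq_forall_mem_range {b : SchauderBasisSeq E} {x : ℕ → ℕ → E}
    (hx : ∀ k, IsBlockSeq b (x k)) :
    ∃ y : ℕ → E, IsBlockSeq b y ∧ ∀ k, y k ∈ Set.range (x k) := by
  have hbdd : ∀ k n, ∃ N, ∀ i, b.coord i (x k n) ≠ 0 → i ≤ N := fun k n => by
    obtain ⟨N, hN⟩ := ((hx k).2.1 n).bddAbove
    exact ⟨N, fun i hi => hN hi⟩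
  choose N hN using hbdd
  let idx : ℕ → ℕ := fun k => Nat.rec 0 (fun k n => max n (N k n) + 1) k
  have hidx : StrictMono idx :=
    strictMono_nat_of_lt_succ fun k => Nat.lt_succ_of_le (le_max_left _ _)
  refine ⟨fun k => x k (idx k), ⟨fun k => (hx k).1 _, fun k => (hx k).2.1 _, ?_⟩,
    fun k => ⟨idx k, rfl⟩⟩
  intro k k' hkk' i hi j hj
  calc i ≤ N k (idx k) := hN k _ i hi
    _ < idx (k + 1) := Nat.lt_succ_of_le (le_max_right _ _)
    _ ≤ idx k' := hidx.monotone hkk'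
    _ ≤ j := (hx k').le_of_coord_ne_zero hj

theorem Submodule.topologicalClosure_span_range_le {ι : Type*} {x : ι → E}
    {S : Submodule ℝ E} (hS : IsClosed (S : Set E)) (hx : ∀ i, x i ∈ S) :
    (span ℝ (Set.range x)).topologicalClosure ≤ S :=
  topologicalClosure_minimal _ (span_le.2 (Set.range_subset_iff.2 hx)) hS

theorem Submodule.mem_topologicalClosure_span_range {ι : Type*} (x : ι → E) (i : ι) :
    x i ∈ (span ℝ (Set.range x)).topologicalClosure :=
  le_topologicalClosure _ (subset_span (Set.mem_range_self i))

theorem SubspaceLE.of_le {L M : Submodule ℝ E} (h : L ≤ M) : SubspaceLE L M :=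
  ⟨⊥, inferInstance, by rwa [sup_bot_eq]⟩

namespace IsBlockSubspace

variable {b : SchauderBasisSeq E}

theorem isClosed {M : Submodule ℝ E} (hM : IsBlockSubspace b M) : IsClosed (M : Set E) := by
  obtain ⟨x, -, rfl⟩ := hM
  exact isClosed_topologicalClosure _

theorem exists_le_of_subspaceLE {L M : Submodule ℝ E} (hL : IsBlockSubspace b L)
    (hM : IsBlockSubspace b M) (h : SubspaceLE L M) :
    ∃ N, IsBlockSubspace b N ∧ N ≤ L ∧ N ≤ M := by
  obtain ⟨u, hu, rfl⟩ := hL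
  obtain ⟨F, hF, hLF⟩ := h
  set d := Module.finrank ℝ F
  have hrel : ∀ k, ∃ g : Fin (d + 1) → ℝ, g ≠ 0 ∧ ∑ j, g j • u (k * (d + 1) + j) ∈ M :=
    fun k => exists_ne_zero_sum_smul_mem_of_forall_mem_sup (by simp [d])
      fun j => hLF (mem_topologicalClosure_span_range u _)
  choose g hg0 hgM using hrel
  refine ⟨_, ⟨_, hu.consecutive_sums g hg0, rfl⟩, ?_,
    topologicalClosure_span_range_le hM.isClosed hgM⟩
  exact topologicalClosure_span_range_le (isClosed_topologicalClosure _) fun k =>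
    sum_mem fun j _ => smul_mem _ _ (mem_topologicalClosure_span_range u _)

end IsBlockSubspace

theorem exists_isBlockSubspace_forall_subspaceLE {b : SchauderBasisSeq E}
    {P : ℕ → Submodule ℝ E} (hP : ∀ k, IsBlockSubspace b (P k)) (hanti : Antitone P) :
    ∃ M, IsBlockSubspace b M ∧ ∀ k, SubspaceLE M (P k) := by
  choose x hx hPx using hP
  obtain ⟨y, hy, hyx⟩ := exists_isBlockSeq_forall_mem_range hx
  have hyP : ∀ k, y k ∈ P k := fun k => by
    obtain ⟨n, hn⟩ := hyx k
    rw [hPx k, ← hn]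
    exact mem_topologicalClosure_span_range _ n
  refine ⟨_, ⟨y, hy, rfl⟩, fun k => ?_⟩
  have hF : FiniteDimensional ℝ (span ℝ (y '' Set.Iio k)) :=
    FiniteDimensional.span_of_finite ℝ ((Set.finite_Iio k).image y)
  have hclosed : IsClosed ((P k ⊔ span ℝ (y '' Set.Iio k) : Submodule ℝ E) : Set E) :=
    isClosed_sup_finiteDimensional _ _ (hPx k ▸ isClosed_topologicalClosure _)
  refine ⟨_, hF, topologicalClosure_span_range_le hclosed fun j => ?_⟩
  rcases lt_or_ge j k with hjk | hkj
  · exact mem_sup_right (subset_span ⟨j, hjk, rfl⟩)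
  · exact mem_sup_left (hanti hkj (hyP j))

theorem exists_antitone_isBlockSubspace_deciding (b : SchauderBasisSeq E) {σ : Type*}
    (τ : Submodule ℝ E → Set σ) (s : ℕ → σ) :
    ∃ P : ℕ → Submodule ℝ E, (∀ k, IsBlockSubspace b (P k)) ∧ Antitone P ∧
      ∀ k, s k ∈ τ (P (k + 1)) → ∀ N, IsBlockSubspace b N → N ≤ P k → s k ∈ τ N := by
  have step : ∀ (k : ℕ) (P : {P // IsBlockSubspace b P}), ∃ Q : {Q // IsBlockSubspace b Q},
      Q.1 ≤ P.1 ∧ (s k ∈ τ Q.1 → ∀ N, IsBlockSubspace b N → N ≤ P.1 → s k ∈ τ N) := by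
    intro k P
    by_cases h : ∃ N, IsBlockSubspace b N ∧ N ≤ P.1 ∧ s k ∉ τ N
    · obtain ⟨N, hN, hNP, hs⟩ := h
      exact ⟨⟨N, hN⟩, hNP, fun hs' => absurd hs' hs⟩
    · push Not at h
      exact ⟨P, le_rfl, fun _ => h⟩
  choose next hle hdecide using step
  let P : ℕ → {P // IsBlockSubspace b P} := fun k =>
    Nat.rec ⟨_, b.isBlockSubspace_span_e⟩ next k
  exact ⟨fun k => (P k).1, fun k => (P k).2, antitone_nat_of_succ_le fun k => hle k (P k),
    fun k => hdecide k (P k)⟩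

end

theorem stabilizing_lemma_block_general
    {E : Type*} [NormedAddCommGroup E] [NormedSpace ℝ E]
    (b : SchauderBasisSeq E)
    {σ : Type*} [Countable σ]
    (τ : Submodule ℝ E → Set σ)
    (hmono : ∀ N M : Submodule ℝ E, IsBlockSubspace b N → IsBlockSubspace b M →
      SubspaceLE N M → τ N ⊆ τ M) :
    ∃ M : Submodule ℝ E, IsBlockSubspace b M ∧
      ∀ L : Submodule ℝ E, IsBlockSubspace b L → L ≤ M → τ L = τ M := by
  rcases isEmpty_or_nonempty σ with hσ | hσ
  · exact ⟨_, b.isBlockSubspace_span_e, fun L _ _ => Subsingleton.elim _ _⟩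
  obtain ⟨s, hs⟩ := exists_surjective_nat σ
  obtain ⟨P, hP, hanti, hdecide⟩ := exists_antitone_isBlockSubspace_deciding b τ s
  obtain ⟨M, hM, hMP⟩ := exists_isBlockSubspace_forall_subspaceLE hP hanti
  refine ⟨M, hM, fun L hL hLM => (hmono L M hL hM (.of_le hLM)).antisymm fun t ht => ?_⟩
  obtain ⟨k, rfl⟩ := hs t
  obtain ⟨F, hF, hMF⟩ := hMP k
  obtain ⟨N, hN, hNL, hNP⟩ := hL.exists_le_of_subspaceLE (hP k) ⟨F, hF, hLM.trans hMF⟩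
  have hPk : s k ∈ τ (P (k + 1)) := hmono M _ hM (hP _) (hMP _) ht
  exact hmono N L hN hL (.of_le hNL) (hdecide k hPk N hN hNP)

/-- The stabilizing lemma for increasing maps on the family of block
subspaces of a Banach space with a Schauder basis. -/
theorem stabilizing_lemma_block
    {E : Type*} [NormedAddCommGroup E] [NormedSpace ℝ E] [CompleteSpace E]
    (b : SchauderBasisSeq E)
    {σ : Type*} [Countable σ]
    (τ : Submodule ℝ E → Set σ)
    (hmono : ∀ N M : Submodule ℝ E, IsBlockSubspace b N → IsBlockSubspace b M →
      SubspaceLE N M → τ N ⊆ τ M) :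
    ∃ M : Submodule ℝ E, IsBlockSubspace b M ∧
      ∀ L : Submodule ℝ E, IsBlockSubspace b L → L ≤ M → τ L = τ M :=
  stabilizing_lemma_block_general b τ hmono
end

section
/- Let E₀ be a Banach space with a Schauder basis and let c ≥ 1. Suppose every block subspace of E₀ contains an infinite-dimensional closed subspace c-isomorphic to E₀. Then for every δ > 0, every infinite-dimensional closed subspace of E₀ contains an infinite-dimensional closed subspace that is c(1+δ)-isomorphic to E₀; in particular E₀ is c(1+δ)-minimal for every δ > 0. -/
open Filter Topology

/-!
Given an infinite-dimensional closed subspace `L`, a gliding hump argument gives unit vectors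
`y k ∈ L` and a block sequence `x k` with `‖y k - x k‖` as small as we like. Composing the
basis projections with norming functionals yields functionals `g k` biorthogonal to the blocks,
of norm at most `4 C` (`C` the basis constant), so `S = 1 + ∑ g k ⊗ (y k - x k)` is an
isomorphism of `E₀`, as close to the identity as we like, with `S (x k) = y k`. It maps the
block subspace spanned by the `x k` into `L`, hence maps the subspace `c`-isomorphic to `E₀`
that the hypothesis provides onto a subspace of `L` that is `c (1 + δ)`-isomorphic to `E₀`.
-/

namespace SchauderBasisSeq

variable {E : Type*} [NormedAddCommGroup E] [NormedSpace ℝ E] (b : SchauderBasisSeq E)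

noncomputable def proj (n : ℕ) : E →L[ℝ] E :=
  ∑ i ∈ Finset.range n, (b.coord i).smulRight (b.e i)

lemma proj_apply (n : ℕ) (z : E) : b.proj n z = ∑ i ∈ Finset.range n, b.coord i z • b.e i := by
  simp [proj]

lemma coord_proj (i n : ℕ) (z : E) :
    b.coord i (b.proj n z) = if i < n then b.coord i z else 0 := by
  simp only [proj_apply, map_sum, map_smul, b.biorth, smul_eq_mul, mul_ite, mul_one, mul_zero,
    Finset.sum_ite_eq, Finset.mem_range]

lemma proj_proj (m n : ℕ) (z : E) : b.proj m (b.proj n z) = b.proj (min m n) z := by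
  simp only [b.proj_apply m, coord_proj, ite_smul, zero_smul, ← Finset.mem_range,
    Finset.sum_ite_mem, Finset.range_inter_range, ← b.proj_apply]

lemma proj_eq_self_of_le {m n : ℕ} {z : E} (hz : b.proj m z = z) (hmn : m ≤ n) :
    b.proj n z = z := by
  rw [← hz, proj_proj, min_eq_right hmn]

lemma proj_eq_zero_of_le {m n : ℕ} {z : E} (hz : b.proj n z = 0) (hmn : m ≤ n) :
    b.proj m z = 0 := by
  rw [← min_eq_left hmn, ← proj_proj, hz, map_zero]

lemma tendsto_proj (z : E) : Tendsto (fun n => b.proj n z) atTop (𝓝 z) := by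
  simpa only [← proj_apply] using b.expand z

lemma exists_norm_proj_le [CompleteSpace E] : ∃ C, 1 ≤ C ∧ ∀ n, ‖b.proj n‖ ≤ C := by
  obtain ⟨C, hC⟩ := banach_steinhaus (g := b.proj) fun z =>
    let ⟨M, hM⟩ := (b.tendsto_proj z).norm.bddAbove_range
    ⟨M, fun n => hM ⟨n, rfl⟩⟩
  exact ⟨max C 1, le_max_right _ _, fun n => (hC n).trans (le_max_left _ _)⟩

lemma range_proj_le_span (n : ℕ) :
    LinearMap.range (b.proj n).toLinearMap ≤ Submodule.span ℝ (b.e '' Set.Iio n) := by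
  rintro _ ⟨z, rfl⟩
  rw [ContinuousLinearMap.coe_coe, proj_apply]
  exact Submodule.sum_mem _ fun i hi =>
    Submodule.smul_mem _ _ (Submodule.subset_span ⟨i, Finset.mem_range.1 hi, rfl⟩)

instance finiteDimensional_range_proj (n : ℕ) :
    FiniteDimensional ℝ (LinearMap.range (b.proj n).toLinearMap) :=
  have : FiniteDimensional ℝ (Submodule.span ℝ (b.e '' Set.Iio n)) :=
    FiniteDimensional.span_of_finite ℝ ((Set.finite_Iio n).image _)
  Submodule.finiteDimensional_of_le (b.range_proj_le_span n)

lemma exists_unit_mem_proj_eq_zero {L : Submodule ℝ E} (hL : ¬ FiniteDimensional ℝ L) (n : ℕ) :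
    ∃ y ∈ L, ‖y‖ = 1 ∧ b.proj n y = 0 := by
  obtain ⟨v, hvL, hv0, hv⟩ : ∃ v ∈ L, v ≠ 0 ∧ b.proj n v = 0 := by
    by_contra! hinj
    let f := ((b.proj n).toLinearMap.comp L.subtype).codRestrict
      (LinearMap.range (b.proj n).toLinearMap) fun v => LinearMap.mem_range_self _ _
    refine hL (Module.Finite.of_injective f ((injective_iff_map_eq_zero f).2 fun v hv => ?_))
    by_contra hv0
    exact hinj v v.2 (by simpa using hv0) (by simpa [f] using congrArg Subtype.val hv)
  refine ⟨‖v‖⁻¹ • v, L.smul_mem _ hvL, norm_smul_inv_norm hv0, ?_⟩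
  rw [map_smul, hv, smul_zero]

lemma exists_gliding_hump {L : Submodule ℝ E} (hL : ¬ FiniteDimensional ℝ L) {ε : ℕ → ℝ}
    (hε : ∀ k, 0 < ε k) :
    ∃ (n : ℕ → ℕ) (x y : ℕ → E), Monotone n ∧ ∀ k, y k ∈ L ∧ ‖y k‖ = 1 ∧
      b.proj (n (k + 1)) (x k) = x k ∧ b.proj (n k) (x k) = 0 ∧ ‖y k - x k‖ < ε k := by
  choose u huL hu1 hu0 using b.exists_unit_mem_proj_eq_zero hL
  have htail : ∀ m k, ∃ m', m ≤ m' ∧ ‖u m - b.proj m' (u m)‖ < ε k := fun m k =>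
    ((eventually_ge_atTop m).and ((b.tendsto_proj (u m)).eventually
      (Metric.ball_mem_nhds (u m) (hε k)))).exists.imp fun m' h =>
        ⟨h.1, by simpa [dist_eq_norm, norm_sub_rev] using h.2⟩
  choose next hle hnext using htail
  let n : ℕ → ℕ := fun k => Nat.rec 0 (fun k m => next m k) k
  refine ⟨n, fun k => b.proj (n (k + 1)) (u (n k)), fun k => u (n k),
    monotone_nat_of_le_succ fun k => hle _ _, fun k => ⟨huL _, hu1 _, ?_, ?_, hnext _ _⟩⟩
  · rw [proj_proj, min_self]
  · rw [proj_proj, min_eq_left (hle _ _), hu0]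

lemma mem_Ico_of_coord_ne_zero {m n i : ℕ} {z : E} (hlo : b.proj m z = 0)
    (hhi : b.proj n z = z) (hi : b.coord i z ≠ 0) : i ∈ Set.Ico m n := by
  have hlo' := b.coord_proj i m z
  have hhi' := b.coord_proj i n z
  rw [hlo, map_zero] at hlo'
  rw [hhi] at hhi'
  constructor
  · by_contra! h
    rw [if_pos h] at hlo'
    exact hi hlo'.symm
  · by_contra! h
    rw [if_neg h.not_gt] at hhi'
    exact hi hhi'

lemma isBlockSeq_of_proj {n : ℕ → ℕ} (hn : Monotone n) {x : ℕ → E} (hx0 : ∀ k, x k ≠ 0)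
    (hhi : ∀ k, b.proj (n (k + 1)) (x k) = x k) (hlo : ∀ k, b.proj (n k) (x k) = 0) :
    IsBlockSeq b x := by
  have hsupp k i (hi : b.coord i (x k) ≠ 0) := b.mem_Ico_of_coord_ne_zero (hlo k) (hhi k) hi
  refine ⟨hx0, fun k => (Set.finite_Iio (n (k + 1))).subset fun i hi => (hsupp k i hi).2,
    fun k l hkl i hi j hj => ?_⟩
  calc i < n (k + 1) := (hsupp k i hi).2
    _ ≤ n l := hn hkl
    _ ≤ j := (hsupp l j hj).1

lemma exists_biorthogonal {C : ℝ} (hC : ∀ m, ‖b.proj m‖ ≤ C) {n : ℕ → ℕ} (hn : Monotone n)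
    {x : ℕ → E} (hx0 : ∀ k, x k ≠ 0) (hhi : ∀ k, b.proj (n (k + 1)) (x k) = x k)
    (hlo : ∀ k, b.proj (n k) (x k) = 0) :
    ∃ g : ℕ → E →L[ℝ] ℝ, (∀ k j, g k (x j) = if k = j then 1 else 0) ∧
      ∀ k, ‖g k‖ ≤ 2 * C / ‖x k‖ := by
  have hf k : ∃ f : E →L[ℝ] ℝ, f (x k) = 1 ∧ ‖f‖ = ‖x k‖⁻¹ := by
    have hx : ‖x k‖ ≠ 0 := norm_ne_zero_iff.2 (hx0 k)
    obtain ⟨f, hf1, hfx⟩ := exists_dual_vector ℝ (x k) hx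
    refine ⟨‖x k‖⁻¹ • f, ?_, ?_⟩
    · simp [hfx, hx]
    · rw [norm_smul, hf1, mul_one, norm_inv, norm_norm]
  choose f hfx hf using hf
  refine ⟨fun k => (f k).comp (b.proj (n (k + 1)) - b.proj (n k)), fun k j => ?_, fun k => ?_⟩
  · simp only [ContinuousLinearMap.comp_apply, sub_apply]
    rcases lt_trichotomy k j with hkj | rfl | hkj
    · rw [b.proj_eq_zero_of_le (hlo j) (hn hkj), b.proj_eq_zero_of_le (hlo j) (hn hkj.le),
        sub_zero, map_zero, if_neg hkj.ne]
    · rw [hhi, hlo, sub_zero, hfx, if_pos rfl]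
    · rw [b.proj_eq_self_of_le (hhi j) (hn hkj), b.proj_eq_self_of_le (hhi j) (hn (by omega)),
        sub_self, map_zero, if_neg hkj.ne']
  · calc ‖(f k).comp (b.proj (n (k + 1)) - b.proj (n k))‖
        ≤ ‖f k‖ * ‖b.proj (n (k + 1)) - b.proj (n k)‖ := ContinuousLinearMap.opNorm_comp_le _ _
      _ ≤ ‖x k‖⁻¹ * (C + C) := by
          rw [hf]
          gcongr
          exact (norm_sub_le _ _).trans (add_le_add (hC _) (hC _))
      _ = 2 * C / ‖x k‖ := by ring

end SchauderBasisSeq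

section Perturbation

variable {E : Type*} [NormedAddCommGroup E] [NormedSpace ℝ E] [CompleteSpace E]

lemma exists_continuousLinearMap_apply_eq_sub {x y : ℕ → E} {g : ℕ → E →L[ℝ] ℝ}
    (hg : ∀ k j, g k (x j) = if k = j then 1 else 0)
    (hsum : Summable fun k => ‖g k‖ * ‖y k - x k‖) :
    ∃ D : E →L[ℝ] E, ‖D‖ ≤ ∑' k, ‖g k‖ * ‖y k - x k‖ ∧ ∀ j, D (x j) = y j - x j := by
  let T : ℕ → E →L[ℝ] E := fun k => (g k).smulRight (y k - x k)
  have hT : Summable fun k => ‖T k‖ := by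
    simpa only [T, ContinuousLinearMap.norm_smulRight_apply] using hsum
  refine ⟨∑' k, T k, ?_, fun j => ?_⟩
  · simpa only [T, ContinuousLinearMap.norm_smulRight_apply] using norm_tsum_le_tsum_norm hT
  · rw [← ContinuousLinearMap.apply_apply (𝕜 := ℝ),
      (ContinuousLinearMap.apply ℝ E (x j)).map_tsum hT.of_norm]
    simp only [T, ContinuousLinearMap.apply_apply, ContinuousLinearMap.smulRight_apply, hg,
      ite_smul, one_smul, zero_smul, tsum_ite_eq]

lemma exists_continuousLinearEquiv_apply_eq_add (D : E →L[ℝ] E) (hD : ‖D‖ < 1) :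
    ∃ S : E ≃L[ℝ] E, ∀ z, S z = z + D z :=
  ⟨.ofUnit (Units.oneSub (-D) (by rwa [norm_neg])), fun z =>
    show ((1 : E →L[ℝ] E) - -D) z = z + D z by simp⟩

theorem exists_continuousLinearEquiv_of_small_perturbation {x y : ℕ → E}
    {g : ℕ → E →L[ℝ] ℝ} (hg : ∀ k j, g k (x j) = if k = j then 1 else 0)
    (hsum : Summable fun k => ‖g k‖ * ‖y k - x k‖) {θ : ℝ}
    (hθ : ∑' k, ‖g k‖ * ‖y k - x k‖ ≤ θ) (hθ1 : θ < 1) :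
    ∃ S : E ≃L[ℝ] E, (∀ j, S (x j) = y j) ∧
      ∀ z, (1 - θ) * ‖z‖ ≤ ‖S z‖ ∧ ‖S z‖ ≤ (1 + θ) * ‖z‖ := by
  obtain ⟨D, hDθ, hDx⟩ := exists_continuousLinearMap_apply_eq_sub hg hsum
  have hD z : ‖D z‖ ≤ θ * ‖z‖ := (D.le_opNorm z).trans (by gcongr; exact hDθ.trans hθ)
  obtain ⟨S, hS⟩ := exists_continuousLinearEquiv_apply_eq_add D ((hDθ.trans hθ).trans_lt hθ1)
  refine ⟨S, fun j => by rw [hS, hDx, add_sub_cancel], fun z => ⟨?_, ?_⟩⟩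
  · have := norm_sub_norm_le z (-D z)
    rw [sub_neg_eq_add, ← hS, norm_neg] at this
    linarith [hD z]
  · rw [hS]
    linarith [norm_add_le z (D z), hD z]

end Perturbation

section Isomorphism

variable {E F : Type*} [NormedAddCommGroup E] [NormedSpace ℝ E]
  [NormedAddCommGroup F] [NormedSpace ℝ F]

lemma InfDimClosed.map_continuousLinearEquiv {N : Submodule ℝ E} (hN : InfDimClosed N)
    (e : E ≃L[ℝ] F) : InfDimClosed (N.map (e.toLinearEquiv : E →ₗ[ℝ] F)) := by
  refine ⟨?_, fun hfin => hN.2 (Module.Finite.equiv (e.toLinearEquiv.submoduleMap N).symm)⟩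
  rw [Submodule.map_coe]
  exact e.toHomeomorph.isClosedMap _ hN.1

lemma isoWithConst_map_continuousLinearEquiv {a : ℝ} (ha : 0 < a) (e : E ≃L[ℝ] F)
    (he : ∀ z, (1 / a) * ‖z‖ ≤ ‖e z‖ ∧ ‖e z‖ ≤ a * ‖z‖) (N : Submodule ℝ E) :
    IsoWithConst a (N.map (e.toLinearEquiv : E →ₗ[ℝ] F)) N := by
  refine ⟨(e.toLinearEquiv.submoduleMap N).symm, fun v => ?_⟩
  obtain ⟨w, rfl⟩ := (e.toLinearEquiv.submoduleMap N).surjective v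
  rw [LinearEquiv.symm_apply_apply, ← Submodule.norm_coe, LinearEquiv.submoduleMap_apply,
    ContinuousLinearEquiv.coe_toLinearEquiv, ← Submodule.norm_coe w]
  obtain ⟨hlo, hhi⟩ := he w
  rw [one_div_mul_eq_div, div_le_iff₀ ha] at hlo ⊢
  constructor <;> linarith

lemma IsoWithConst.trans {X Y Z : Type*} [NormedAddCommGroup X] [NormedSpace ℝ X]
    [NormedAddCommGroup Y] [NormedSpace ℝ Y] [NormedAddCommGroup Z] [NormedSpace ℝ Z]
    {a b : ℝ} (hb : 0 ≤ b) (hXY : IsoWithConst a X Y) (hYZ : IsoWithConst b Y Z) :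
    IsoWithConst (a * b) X Z := by
  obtain ⟨T, hT⟩ := hXY
  obtain ⟨U, hU⟩ := hYZ
  refine ⟨T.trans U, fun v => ⟨?_, ?_⟩⟩
  · calc 1 / (a * b) * ‖v‖ = 1 / b * (1 / a * ‖v‖) := by ring
      _ ≤ 1 / b * ‖T v‖ := by gcongr; exact (hT v).1
      _ ≤ ‖U (T v)‖ := (hU (T v)).1
  · calc ‖U (T v)‖ ≤ b * ‖T v‖ := (hU (T v)).2
      _ ≤ b * (a * ‖v‖) := by gcongr; exact (hT v).2
      _ = a * b * ‖v‖ := by ring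

end Isomorphism

namespace SchauderBasisSeq

variable {E : Type*} [NormedAddCommGroup E] [NormedSpace ℝ E] [CompleteSpace E]
  (b : SchauderBasisSeq E)

theorem exists_isBlockSeq_map_topologicalClosure_span_le {L : Submodule ℝ E}
    (hL : InfDimClosed L) {θ : ℝ} (hθ0 : 0 < θ) (hθ1 : θ < 1) :
    ∃ (x : ℕ → E) (S : E ≃L[ℝ] E), IsBlockSeq b x ∧
      (Submodule.span ℝ (Set.range x)).topologicalClosure.map (S.toLinearEquiv : E →ₗ[ℝ] E) ≤ L ∧
      ∀ z, (1 - θ) * ‖z‖ ≤ ‖S z‖ ∧ ‖S z‖ ≤ (1 + θ) * ‖z‖ := by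
  obtain ⟨C, hC1, hC⟩ := b.exists_norm_proj_le
  -- The biorthogonal functionals of the blocks will have norm at most `4 * C`.
  set ε : ℕ → ℝ := fun k => θ / (4 * C) / 2 / 2 ^ k
  obtain ⟨n, x, y, hn, hxy⟩ := b.exists_gliding_hump hL.2 (ε := ε) fun k => by positivity
  choose hyL hy1 hhi hlo hyx using hxy
  have hx k : 1 / 2 ≤ ‖x k‖ := by
    have hε : ε k ≤ 1 / 2 := by
      calc ε k ≤ θ / (4 * C) / 2 := div_le_self (by positivity) (one_le_pow₀ (by norm_num))
        _ ≤ 1 / 2 := by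
          rw [div_div, div_le_iff₀ (by positivity)]
          nlinarith
    linarith [norm_sub_norm_le (y k) (x k), hy1 k, hyx k]
  have hx0 k : x k ≠ 0 := norm_pos_iff.1 ((hx k).trans_lt' (by norm_num))
  obtain ⟨g, hgx, hg⟩ := b.exists_biorthogonal hC hn hx0 hhi hlo
  have hgyx k : ‖g k‖ * ‖y k - x k‖ ≤ θ / 2 / 2 ^ k := by
    have hg4 : ‖g k‖ ≤ 4 * C :=
      (hg k).trans ((div_le_iff₀ (by linarith [hx k])).2 (by nlinarith [hx k]))
    calc ‖g k‖ * ‖y k - x k‖ ≤ 4 * C * ε k := by gcongr; exact (hyx k).le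
      _ = θ / 2 / 2 ^ k := by simp only [ε]; field_simp
  have hsum := (summable_geometric_two' θ).of_nonneg_of_le (fun k => by positivity) hgyx
  obtain ⟨S, hSx, hS⟩ := exists_continuousLinearEquiv_of_small_perturbation hgx hsum
    ((hsum.tsum_le_tsum hgyx (summable_geometric_two' θ)).trans (tsum_geometric_two' θ).le) hθ1
  refine ⟨x, S, b.isBlockSeq_of_proj hn hx0 hhi hlo, ?_, hS⟩
  refine Submodule.map_le_iff_le_comap.2
    (Submodule.topologicalClosure_minimal _ ?_ (hL.1.preimage S.continuous))
  exact Submodule.span_le.2 (Set.range_subset_iff.2 fun k => by simp [hSx, hyL])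

end SchauderBasisSeq

/-- If every block subspace of a Banach space `E₀` with a Schauder
basis contains an infinite-dimensional closed subspace `c`-isomorphic to `E₀`, then for
every `δ > 0` the space `E₀` is `c(1+δ)`-minimal. -/
theorem block_minimal_implies_minimal
    {E₀ : Type*} [NormedAddCommGroup E₀] [NormedSpace ℝ E₀] [CompleteSpace E₀]
    (b : SchauderBasisSeq E₀)
    (c : ℝ) (hc : 1 ≤ c)
    (h : ∀ M : Submodule ℝ E₀, IsBlockSubspace b M →
      ∃ N : Submodule ℝ E₀, N ≤ M ∧ InfDimClosed N ∧ IsoWithConst c ↥N E₀) :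
    ∀ δ : ℝ, 0 < δ → CMinimalSpace (c * (1 + δ)) E₀ := by
  intro δ hδ L hL
  -- `θ` is chosen so that `1 - θ = 1 / (1 + δ)`.
  set θ := δ / (1 + δ)
  obtain ⟨x, S, hx, hSL, hS⟩ := b.exists_isBlockSeq_map_topologicalClosure_span_le hL
    (θ := θ) (by positivity) ((div_lt_one (by positivity)).2 (by linarith))
  obtain ⟨N, hNM, hN, hNc⟩ := h _ ⟨x, hx, rfl⟩
  have hS' z : 1 / (1 + δ) * ‖z‖ ≤ ‖S z‖ ∧ ‖S z‖ ≤ (1 + δ) * ‖z‖ := by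
    have h1 : 1 - θ = 1 / (1 + δ) := by simp only [θ]; field_simp; ring
    have h2 : θ ≤ δ := div_le_self hδ.le (by linarith)
    rw [← h1]
    exact ⟨(hS z).1, (hS z).2.trans (by gcongr)⟩
  refine ⟨_, (Submodule.map_mono hNM).trans hSL, hN.map_continuousLinearEquiv S, ?_⟩
  rw [mul_comm]
  exact (isoWithConst_map_continuousLinearEquiv (by positivity) S hS' N).trans (by linarith) hNc
end
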